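/- arXiv:2507.02944 — 7 statements merged into one kernel-verified Lean document; each statement's English description precedes it below -/
import Mathlib

section
/- Let n ≥ 1 and let W be an n × n real matrix that is column-stochastic (nonnegative entries, columns summing to 1), feedforward (W_{ij} = 0 whenever i < j), and with forward leakage (for every j < n there exists i > j with W_{ij} > 0). Then for every probability vector π ∈ ℝ^n, the iterates W^t π converge to e_n as t → ∞; in particular the mass at the sink, (W^t π)_n, tends to 1. -/
lemma contract_aux {c : ℝ} (hc0 : 0 ≤ c) (hc1 : c < 1) {x eps : ℕ → ℝ}
    (hx : ∀ t, 0 ≤ x t) (heps : ∀ t, 0 ≤ eps t)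
    (hrec : ∀ t, x (t + 1) ≤ c * x t + eps t)
    (hlim : Filter.Tendsto eps Filter.atTop (nhds 0)) :
    Filter.Tendsto x Filter.atTop (nhds 0) := by
  rw [Metric.tendsto_atTop]
  intro δ hδ
  have h1c : 0 < 1 - c := by linarith
  obtain ⟨N, hN⟩ := (Metric.tendsto_atTop.mp hlim) ((1 - c) * (δ / 2)) (by positivity)
  have hbound : ∀ m, x (N + m) ≤ c ^ m * x N + δ / 2 := by
    intro m
    induction m with
    | zero => simp; linarith
    | succ m ih =>
      have h2 : eps (N + m) ≤ (1 - c) * (δ / 2) := by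
        have := hN (N + m) (by omega)
        rw [Real.dist_eq, sub_zero, abs_of_nonneg (heps _)] at this
        linarith
      have h3 : x (N + (m + 1)) = x ((N + m) + 1) := by ring_nf
      calc x (N + (m + 1)) ≤ c * x (N + m) + eps (N + m) := by rw [h3]; exact hrec _
        _ ≤ c * (c ^ m * x N + δ / 2) + (1 - c) * (δ / 2) :=
            add_le_add (mul_le_mul_of_nonneg_left ih hc0) h2
        _ = c ^ (m + 1) * x N + δ / 2 := by rw [pow_succ]; ring
  have hpow : Filter.Tendsto (fun m => c ^ m * x N) Filter.atTop (nhds 0) := by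
    simpa using (tendsto_pow_atTop_nhds_zero_of_lt_one hc0 hc1).mul_const (x N)
  obtain ⟨M, hM⟩ := (Metric.tendsto_atTop.mp hpow) (δ / 2) (by linarith)
  refine ⟨N + M, fun t ht => ?_⟩
  have h1 : x t ≤ c ^ (t - N) * x N + δ / 2 := by
    have := hbound (t - N)
    rwa [Nat.add_sub_cancel' (by omega)] at this
  have h2 : c ^ (t - N) * x N < δ / 2 := by
    have := hM (t - N) (by omega)
    rw [Real.dist_eq, sub_zero] at this
    exact lt_of_abs_lt this
  rw [Real.dist_eq, sub_zero, abs_of_nonneg (hx t)]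
  linarith

/-- **Probability mass concentrates at the sink.**
For a column-stochastic feedforward matrix `W` with forward leakage on `Fin (n+1)`
(sink `Fin.last n`), the iterates `W^t π` of any probability vector `π` converge to the
coordinate vector at the sink; in particular the mass at the sink `(W^t π) (Fin.last n)`
tends to `1`. -/
theorem feedforward_iterates_converge_to_sink
    (n : ℕ) (W : Matrix (Fin (n + 1)) (Fin (n + 1)) ℝ)
    (hnonneg : ∀ i j, 0 ≤ W i j)
    (hcol : ∀ j, ∑ i, W i j = 1)
    (hff : ∀ i j, i < j → W i j = 0)
    (hleak : ∀ j : Fin (n + 1), j ≠ Fin.last n → ∃ i, j < i ∧ 0 < W i j)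
    (π : Fin (n + 1) → ℝ) (hπ : ∀ i, 0 ≤ π i) (hπsum : ∑ i, π i = 1) :
    Filter.Tendsto (fun t : ℕ => (W ^ t).mulVec π) Filter.atTop
      (nhds (Pi.single (Fin.last n) 1)) ∧
    Filter.Tendsto (fun t : ℕ => (W ^ t).mulVec π (Fin.last n)) Filter.atTop (nhds 1) := by
  set x : ℕ → Fin (n + 1) → ℝ := fun t => (W ^ t).mulVec π with hxdef
  have hstepv : ∀ t, x (t + 1) = W.mulVec (x t) := by
    intro t
    show (W ^ (t + 1)).mulVec π = W.mulVec ((W ^ t).mulVec π)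
    rw [Matrix.mulVec_mulVec, ← pow_succ']
  have hstep : ∀ t i, x (t + 1) i = ∑ j, W i j * x t j := by
    intro t i
    rw [hstepv t]
    rfl
  have hx0 : ∀ i, x 0 i = π i := by intro i; simp [hxdef, Matrix.one_mulVec]
  have hxnonneg : ∀ t i, 0 ≤ x t i := by
    intro t
    induction t with
    | zero => intro i; rw [hx0]; exact hπ i
    | succ t ih =>
      intro i
      rw [hstep]
      exact Finset.sum_nonneg fun j _ => mul_nonneg (hnonneg i j) (ih j)
  have hxsum : ∀ t, ∑ i, x t i = 1 := by
    intro t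
    induction t with
    | zero => simp [hx0, hπsum]
    | succ t ih =>
      have : ∑ i, x (t + 1) i = ∑ j, (∑ i, W i j) * x t j := by
        simp only [hstep]
        rw [Finset.sum_comm]
        exact Finset.sum_congr rfl fun j _ => by rw [Finset.sum_mul]
      rw [this]
      simp only [hcol, one_mul, ih]
  -- each non-sink coordinate tends to 0
  have key : ∀ m : ℕ, ∀ j : Fin (n + 1), j.val = m → j ≠ Fin.last n →
      Filter.Tendsto (fun t => x t j) Filter.atTop (nhds 0) := by
    intro m
    induction m using Nat.strong_induction_on with
    | _ m ih =>
      intro j hjm hjlast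
      have hWjj : W j j < 1 := by
        obtain ⟨i, hji, hWi⟩ := hleak j hjlast
        have h1 : W j j + W i j ≤ ∑ k, W k j := by
          have := Finset.sum_le_sum_of_subset_of_nonneg
            (s := {j, i}) (t := Finset.univ) (by simp)
            (fun k _ _ => hnonneg k j)
          rwa [Finset.sum_pair (Fin.ne_of_lt hji)] at this
        rw [hcol j] at h1
        linarith
      set S : Finset (Fin (n + 1)) := Finset.univ.filter (fun j' => j' < j) with hSdef
      have hrec : ∀ t, x (t + 1) j = W j j * x t j + ∑ j' ∈ S, W j j' * x t j' := by
        intro t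
        rw [hstep]
        have hsplit : (Finset.univ : Finset (Fin (n + 1))) =
            (Finset.univ.filter (fun j' => j' ≤ j)) ∪ (Finset.univ.filter (fun j' => j < j')) := by
          ext k
          simpa using le_or_gt k j
        rw [hsplit, Finset.sum_union]
        · have h2 : ∑ j' ∈ Finset.univ.filter (fun j' => j < j'), W j j' * x t j' = 0 := by
            apply Finset.sum_eq_zero
            intro k hk
            rw [Finset.mem_filter] at hk
            rw [hff j k hk.2, zero_mul]
          rw [h2, add_zero]
          have h3 : Finset.univ.filter (fun j' => j' ≤ j) = insert j S := by
            ext k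
            simp only [Finset.mem_filter, Finset.mem_univ, true_and, Finset.mem_insert, hSdef]
            rw [le_iff_lt_or_eq]
            tauto
          rw [h3, Finset.sum_insert (by simp [hSdef])]
        · rw [Finset.disjoint_left]
          intro k hk hk'
          rw [Finset.mem_filter] at hk hk'
          exact absurd hk.2 (not_le.mpr hk'.2)
      have heps : Filter.Tendsto (fun t => ∑ j' ∈ S, W j j' * x t j') Filter.atTop (nhds 0) := by
        have h0 : Filter.Tendsto (fun t => ∑ j' ∈ S, W j j' * x t j') Filter.atTop
            (nhds (∑ j' ∈ S, (0 : ℝ))) := by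
          apply tendsto_finset_sum
          intro j' hj'
          rw [hSdef, Finset.mem_filter] at hj'
          have hlt : j' < j := hj'.2
          have hltv : (j' : ℕ) < (j : ℕ) := hlt
          have hne : j' ≠ Fin.last n := Fin.ne_of_lt (lt_of_lt_of_le hlt (Fin.le_last j))
          have := (ih j'.val (by omega) j' rfl hne).const_mul (W j j')
          simpa using this
        simpa using h0
      exact contract_aux (hnonneg j j) hWjj (fun t => hxnonneg t j)
        (fun t => Finset.sum_nonneg fun j' _ => mul_nonneg (hnonneg j j') (hxnonneg t j'))
        (fun t => le_of_eq (hrec t)) heps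
  -- mass at the sink tends to 1
  have hlast : Filter.Tendsto (fun t => x t (Fin.last n)) Filter.atTop (nhds 1) := by
    have hrw : ∀ t, x t (Fin.last n) =
        1 - ∑ i ∈ Finset.univ.erase (Fin.last n), x t i := by
      intro t
      have := Finset.sum_erase_add Finset.univ (x t) (Finset.mem_univ (Fin.last n))
      rw [hxsum t] at this
      linarith
    have hsum0 : Filter.Tendsto (fun t => ∑ i ∈ Finset.univ.erase (Fin.last n), x t i)
        Filter.atTop (nhds 0) := by
      have h0 : Filter.Tendsto (fun t => ∑ i ∈ Finset.univ.erase (Fin.last n), x t i)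
          Filter.atTop (nhds (∑ _i ∈ Finset.univ.erase (Fin.last n), (0 : ℝ))) := by
        apply tendsto_finset_sum
        intro i hi
        exact key i.val i rfl (Finset.ne_of_mem_erase hi)
      simpa using h0
    have := Filter.Tendsto.sub (tendsto_const_nhds (x := (1 : ℝ)) (f := Filter.atTop)) hsum0
    simp only [sub_zero] at this
    simpa only [← hrw] using this
  constructor
  · rw [tendsto_pi_nhds]
    intro i
    by_cases hi : i = Fin.last n
    · subst hi
      simpa [Pi.single_eq_same] using hlast
    · rw [Pi.single_eq_of_ne hi]
      exact key i.val i rfl hi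
  · exact hlast
end

section
/- Let n ≥ 1, let p ∈ (0, 1], and let W be an n × n real matrix that is column-stochastic (nonnegative entries, columns summing to 1), feedforward (W_{ij} = 0 whenever i < j), and satisfies the forward-move condition: for every j < n, Σ_{i > j} W_{ij} ≥ p. Then for every t ∈ ℕ and every starting index j, the probability of being at the sink after t steps dominates a binomial tail: (W^t)_{n,j} ≥ Σ_{k = n−1}^{t} C(t,k) p^k (1−p)^{t−k}, i.e. (W^t)_{n,j} ≥ P(X ≥ n−1) where X is a Binomial(t, p) random variable. -/
open Finset

noncomputable def Tl (p : ℝ) (t m : ℕ) : ℝ :=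
  ∑ k ∈ Finset.Icc m t, (t.choose k : ℝ) * p ^ k * (1 - p) ^ (t - k)

lemma Tl_zero (p : ℝ) (m : ℕ) : Tl p 0 m = if m = 0 then 1 else 0 := by
  unfold Tl
  rcases Nat.eq_zero_or_pos m with h | h
  · subst h; simp
  · rw [Finset.Icc_eq_empty (by omega)]
    simp [Nat.pos_iff_ne_zero.mp h]

lemma Tl_nonneg {p : ℝ} (hp0 : 0 ≤ p) (hp1 : p ≤ 1) (t m : ℕ) : 0 ≤ Tl p t m := by
  unfold Tl
  apply Finset.sum_nonneg
  intro k _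
  have h1 : (0:ℝ) ≤ 1 - p := by linarith
  positivity

lemma Tl_antitone {p : ℝ} (hp0 : 0 ≤ p) (hp1 : p ≤ 1) (t : ℕ) {m₁ m₂ : ℕ}
    (h : m₁ ≤ m₂) : Tl p t m₂ ≤ Tl p t m₁ := by
  unfold Tl
  apply Finset.sum_le_sum_of_subset_of_nonneg (Finset.Icc_subset_Icc_left h)
  intro k _ _
  have h1 : (0:ℝ) ≤ 1 - p := by linarith
  positivity

lemma Tl_top (p : ℝ) (t : ℕ) : Tl p t 0 = 1 := by
  unfold Tl
  have h : Finset.Icc 0 t = Finset.range (t + 1) := by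
    ext k; simp [Nat.lt_succ_iff]
  rw [h]
  have hb := add_pow p (1 - p) t
  simp only [add_sub_cancel, one_pow] at hb
  conv_rhs => rw [hb]
  apply Finset.sum_congr rfl
  intro k _
  ring

lemma Tl_succ (p : ℝ) (t m : ℕ) :
    Tl p (t + 1) (m + 1) = p * Tl p t m + (1 - p) * Tl p t (m + 1) := by
  have himg : ∀ a b : ℕ, Finset.Icc (a + 1) (b + 1) = (Finset.Icc a b).image (· + 1) := by
    intro a b
    ext k
    simp only [Finset.mem_image, Finset.mem_Icc]
    constructor
    · intro hk; exact ⟨k - 1, by omega, by omega⟩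
    · rintro ⟨x, hx, rfl⟩; omega
  rcases lt_or_ge t m with h | h
  · unfold Tl
    rw [Finset.Icc_eq_empty (by omega), Finset.Icc_eq_empty (by omega),
      Finset.Icc_eq_empty (by omega)]
    simp
  · unfold Tl
    rw [himg, Finset.sum_image (by intro a _ b _ hab; simp only at hab; omega)]
    have hsplit : ∀ k ∈ Finset.Icc m t,
        (((t + 1).choose (k + 1) : ℝ)) * p ^ (k + 1) * (1 - p) ^ (t + 1 - (k + 1)) =
        p * ((t.choose k : ℝ) * p ^ k * (1 - p) ^ (t - k))
          + (t.choose (k + 1) : ℝ) * p ^ (k + 1) * (1 - p) ^ (t - k) := by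
      intro k hk
      rw [Nat.choose_succ_succ]
      push_cast
      simp only [Nat.succ_eq_add_one]
      ring
    rw [Finset.sum_congr rfl hsplit, Finset.sum_add_distrib, ← Finset.mul_sum]
    congr 1
    rcases Nat.eq_zero_or_pos t with rfl | ht
    · have hm : m = 0 := by omega
      subst hm
      simp
    · obtain ⟨s, rfl⟩ : ∃ s, t = s + 1 := ⟨t - 1, by omega⟩
      rw [Finset.sum_Icc_succ_top (by omega : m ≤ s + 1)]
      rw [himg m s, Finset.mul_sum, Finset.sum_image (by intro a _ b _ hab; simp only at hab; omega)]
      rw [show ((s+1).choose (s+1+1) : ℝ) = 0 by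
        simp [Nat.choose_eq_zero_of_lt]]
      rw [zero_mul, zero_mul, add_zero]
      apply Finset.sum_congr rfl
      intro k hk
      simp only [Finset.mem_Icc] at hk
      rw [show s + 1 - k = (s + 1 - (k + 1)) + 1 by omega]
      ring



/-- **Sink occupation dominates a binomial tail.**
`W` is an `(n+1) × (n+1)` column-stochastic feedforward matrix (sink `Fin.last n`,
so `N = n` forward moves suffice from the worst-case start) satisfying the forward-move
condition: from every non-sink node `j`, the one-step probability of moving strictly
forward is at least `p`.  Then for every `t` and every start `j`, the probability
`(W ^ t) (Fin.last n) j` of occupying the sink after `t` steps is at least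
`P(X ≥ n)` for `X ~ Binomial(t, p)`. -/
theorem sink_probability_dominates_binomial_tail
    (n : ℕ) (p : ℝ) (hp0 : 0 < p) (hp1 : p ≤ 1)
    (W : Matrix (Fin (n + 1)) (Fin (n + 1)) ℝ)
    (hnonneg : ∀ i j, 0 ≤ W i j)
    (hcol : ∀ j, ∑ i, W i j = 1)
    (hff : ∀ i j, i < j → W i j = 0)
    (hfwd : ∀ j : Fin (n + 1), j ≠ Fin.last n →
      p ≤ ∑ i ∈ Finset.univ.filter (fun i => j < i), W i j) :
    ∀ (t : ℕ) (j : Fin (n + 1)),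
      (∑ k ∈ Finset.Icc n t, (t.choose k : ℝ) * p ^ k * (1 - p) ^ (t - k)) ≤
        (W ^ t) (Fin.last n) j := by
  have hWlast : W (Fin.last n) (Fin.last n) = 1 := by
    have h := hcol (Fin.last n)
    rw [Finset.sum_eq_single (Fin.last n)] at h
    · exact h
    · intro i _ hi
      exact hff i (Fin.last n) (lt_of_le_of_ne (Fin.le_last i) hi)
    · simp
  have hsink : ∀ t, (W ^ t) (Fin.last n) (Fin.last n) = 1 := by
    intro t
    induction t with
    | zero => simp [Matrix.one_apply]
    | succ t ih =>
      rw [pow_succ, Matrix.mul_apply, Finset.sum_eq_single (Fin.last n)]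
      · rw [ih, hWlast, one_mul]
      · intro i _ hi
        rw [hff i (Fin.last n) (lt_of_le_of_ne (Fin.le_last i) hi), mul_zero]
      · simp
  have key : ∀ (t : ℕ) (j : Fin (n + 1)), Tl p t (n - j.val) ≤ (W ^ t) (Fin.last n) j := by
    intro t
    induction t with
    | zero =>
      intro j
      by_cases hj : j = Fin.last n
      · subst hj
        rw [pow_zero, Matrix.one_apply_eq, Fin.val_last, Nat.sub_self, Tl_zero, if_pos rfl]
      · have hjv : j.val < n := Fin.val_lt_last hj
        rw [pow_zero, Matrix.one_apply_ne (fun h => hj h.symm), Tl_zero,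
          if_neg (by omega)]
    | succ t ih =>
      intro j
      by_cases hj : j = Fin.last n
      · subst hj
        rw [hsink, Fin.val_last, Nat.sub_self, Tl_top]
      · have hjv : j.val < n := Fin.val_lt_last hj
        set m := n - j.val - 1 with hmdef
        have hmeq : n - j.val = m + 1 := by omega
        rw [hmeq, Tl_succ, pow_succ, Matrix.mul_apply]
        set S := Finset.univ.filter (fun i : Fin (n+1) => j < i) with hS
        set q : ℝ := ∑ i ∈ S, W i j with hq
        have hpq : p ≤ q := hfwd j hj
        have hWjj : W j j = 1 - q := by
          have h := hcol j
          rw [← Finset.sum_filter_add_sum_filter_not Finset.univ (fun i => j < i)] at h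
          have h2 : ∑ i ∈ Finset.univ.filter (fun i => ¬ j < i), W i j = W j j := by
            rw [Finset.sum_eq_single j]
            · intro i hi hij
              simp only [Finset.mem_filter, Finset.mem_univ, true_and, not_lt] at hi
              exact hff i j (lt_of_le_of_ne hi hij)
            · intro h3
              simp at h3
          rw [h2] at h
          linarith
        have hIHj := ih j
        rw [hmeq] at hIHj
        have hAB : Tl p t (m + 1) ≤ Tl p t m := Tl_antitone hp0.le hp1 t (by omega)
        have hstep1 : p * Tl p t m + (1 - p) * Tl p t (m + 1)
            ≤ q * Tl p t m + (1 - q) * Tl p t (m + 1) := by nlinarith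
        refine le_trans hstep1 ?_
        have hfin : q * Tl p t m + (1 - q) * Tl p t (m + 1)
            = (∑ i ∈ S, Tl p t m * W i j) + Tl p t (m + 1) * W j j := by
          rw [← Finset.mul_sum, hWjj]
          ring
        rw [hfin]
        have hjS : j ∉ S := by simp [hS]
        have hstep2 : (∑ i ∈ S, Tl p t m * W i j) + Tl p t (m + 1) * W j j
            ≤ (∑ i ∈ S, (W ^ t) (Fin.last n) i * W i j)
              + (W ^ t) (Fin.last n) j * W j j := by
          apply add_le_add
          · apply Finset.sum_le_sum
            intro i hi
            apply mul_le_mul_of_nonneg_right _ (hnonneg i j)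
            have hji : j < i := by
              simp only [hS, Finset.mem_filter, Finset.mem_univ, true_and] at hi
              exact hi
            have : n - i.val ≤ m := by
              have := hji
              rw [Fin.lt_def] at this
              omega
            exact le_trans (Tl_antitone hp0.le hp1 t this) (ih i)
          · exact mul_le_mul_of_nonneg_right hIHj (hnonneg j j)
        refine le_trans hstep2 ?_
        have hins : (∑ i ∈ S, (W ^ t) (Fin.last n) i * W i j)
            + (W ^ t) (Fin.last n) j * W j j
            = ∑ i ∈ insert j S, (W ^ t) (Fin.last n) i * W i j := by
          rw [Finset.sum_insert hjS]
          ring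
        rw [hins]
        apply Finset.sum_le_sum_of_subset_of_nonneg (Finset.subset_univ _)
        intro i _ hi
        simp only [Finset.mem_insert, hS, Finset.mem_filter, Finset.mem_univ, true_and,
          not_or, not_lt] at hi
        rw [hff i j (lt_of_le_of_ne hi.2 hi.1), mul_zero]
  intro t j
  exact le_trans (Tl_antitone hp0.le hp1 t (Nat.sub_le n j.val)) (key t j)
end

section
/- Let n ≥ 1, let p ∈ (0, 1], and let W̄ be an n × n real matrix that is column-stochastic (nonnegative entries, columns summing to 1), feedforward (W̄_{ij} = 0 whenever i < j), and satisfies the forward-move condition: for every j < n, Σ_{i > j} W̄_{ij} ≥ p. Then for every t ∈ ℕ with t·p ≥ 2(n−1) and every starting index j, (W̄^t)_{n,j} ≥ 1 − exp(−p(n−1)); equivalently, the total variation distance between the column (W̄^t)_{·,j} and the stationary distribution e_n, namely (1/2)·Σ_i |(W̄^t)_{i,j} − (e_n)_i| = 1 − (W̄^t)_{n,j}, is at most exp(−p(n−1)). -/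
set_option maxHeartbeats 1000000

open Finset


/-- Padé-type lower bound for the logarithm: for `z ≥ 1`,
`3(z²-1)/(z²+4z+1) ≤ log z`. -/
lemma mtb_log_pade {z : ℝ} (hz : 1 ≤ z) : 3 * (z ^ 2 - 1) / (z ^ 2 + 4 * z + 1) ≤ Real.log z := by
  have hD : ∀ y : ℝ, 1 ≤ y → (0:ℝ) < y ^ 2 + 4 * y + 1 := by intro y hy; nlinarith
  set f : ℝ → ℝ := fun y => Real.log y - (3 * y ^ 2 - 3) / (y ^ 2 + 4 * y + 1) with hf
  have hderiv : ∀ y ∈ interior (Set.Ici (1:ℝ)),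
      HasDerivAt f (y⁻¹ - (6 * y * (y ^ 2 + 4 * y + 1) - (3 * y ^ 2 - 3) * (2 * y + 4)) /
        (y ^ 2 + 4 * y + 1) ^ 2) y := by
    intro y hy
    rw [interior_Ici] at hy
    have hy1 : (1:ℝ) < y := hy
    have h0 : y ≠ 0 := by intro h; rw [h] at hy1; norm_num at hy1
    have hDy : y ^ 2 + 4 * y + 1 ≠ 0 := ne_of_gt (hD y hy1.le)
    have h1 : HasDerivAt Real.log y⁻¹ y := Real.hasDerivAt_log h0
    have h2 : HasDerivAt (fun y : ℝ => 3 * y ^ 2 - 3) (6 * y) y := by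
      have := ((hasDerivAt_pow 2 y).const_mul (3:ℝ)).sub_const (3:ℝ)
      exact this.congr_deriv (by push_cast; ring)
    have h3 : HasDerivAt (fun y : ℝ => y ^ 2 + 4 * y + 1) (2 * y + 4) y := by
      have := ((hasDerivAt_pow 2 y).add ((hasDerivAt_id y).const_mul (4:ℝ))).add_const (1:ℝ)
      exact this.congr_deriv (by push_cast; ring)
    exact h1.sub (h2.div h3 hDy)
  have hmono : MonotoneOn f (Set.Ici 1) := by
    apply monotoneOn_of_deriv_nonneg (convex_Ici 1)
    · apply ContinuousOn.sub
      · exact Real.continuousOn_log.mono (fun y hy => Set.mem_compl_singleton_iff.mpr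
          (ne_of_gt (lt_of_lt_of_le zero_lt_one hy)))
      · exact ContinuousOn.div (Continuous.continuousOn (by continuity))
          (Continuous.continuousOn (by continuity))
          (fun y hy => ne_of_gt (hD y hy))
    · intro y hy
      exact (hderiv y hy).differentiableAt.differentiableWithinAt
    · intro y hy
      rw [(hderiv y hy).deriv]
      rw [interior_Ici] at hy
      have hy1 : (1:ℝ) < y := hy
      have h0 : (0:ℝ) < y := lt_trans zero_lt_one hy1
      have hDy := hD y hy1.le
      rw [sub_nonneg, div_le_iff₀ (by positivity), inv_mul_eq_div, le_div_iff₀ h0]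
      nlinarith [sq_nonneg ((y - 1) ^ 2), sq_nonneg (y - 1)]
  have h1 : f 1 ≤ f z := hmono (Set.mem_Ici.mpr le_rfl) (Set.mem_Ici.mpr hz) hz
  have h2 : f 1 = 0 := by
    simp only [hf, Real.log_one]
    norm_num
  have h3 : (3 * z ^ 2 - 3) / (z ^ 2 + 4 * z + 1) = 3 * (z ^ 2 - 1) / (z ^ 2 + 4 * z + 1) := by
    ring_nf
  have h4 := h2 ▸ h1
  simp only [hf] at h4
  linarith [h3 ▸ h4]

/-- For `0 < c ≤ 1` we get `3(1-c²)/(c²+4c+1) ≤ -log c`. -/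
lemma neg_mtb_log_pade {c : ℝ} (h0 : 0 < c) (h1 : c ≤ 1) :
    3 * (1 - c ^ 2) / (c ^ 2 + 4 * c + 1) ≤ -Real.log c := by
  have hz : 1 ≤ 1 / c := (le_div_iff₀ h0).mpr (by linarith)
  have h := mtb_log_pade hz
  rw [one_div, Real.log_inv] at h
  have heq : 3 * ((c⁻¹) ^ 2 - 1) / ((c⁻¹) ^ 2 + 4 * (c⁻¹) + 1)
      = 3 * (1 - c ^ 2) / (c ^ 2 + 4 * c + 1) := by
    rw [div_eq_div_iff]
    · field_simp
      ring
    · have h5 : (0:ℝ) < (c⁻¹)^2 + 4 * (c⁻¹) + 1 := by positivity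
      linarith
    · nlinarith
  rw [heq] at h
  exact h

lemma mtb_log_three_lt : Real.log 3 < 1.0989 := by
  have h23 : Real.log 3 = Real.log 2 + Real.log (3 / 2) := by
    rw [← Real.log_mul (by norm_num) (by norm_num)]
    norm_num
  have habs : |(1/3 : ℝ)| < 1 := by rw [abs_of_nonneg] <;> norm_num
  have hs := Real.abs_log_sub_add_sum_range_le habs 7
  have h13 : |(1/3:ℝ)| = 1/3 := by rw [abs_of_nonneg]; norm_num
  rw [h13] at hs
  have hlb := neg_le_of_abs_le hs
  have hS : ∑ i ∈ range 7, (1/3:ℝ) ^ (i + 1) / (i + 1)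
      = 1/3 + (1/3:ℝ)^2/2 + (1/3:ℝ)^3/3 + (1/3:ℝ)^4/4 + (1/3:ℝ)^5/5 + (1/3:ℝ)^6/6
        + (1/3:ℝ)^7/7 := by
    simp [Finset.sum_range_succ]
    norm_num
  have hln32 : Real.log (3/2) = - Real.log (1 - 1/3) := by
    rw [show (1:ℝ) - 1/3 = 2/3 by norm_num]
    rw [show (3:ℝ)/2 = (2/3)⁻¹ by norm_num, Real.log_inv]
  have hub : Real.log (3/2) ≤ (1/3:ℝ)^8 / (1 - 1/3)
      + ∑ i ∈ range 7, (1/3:ℝ) ^ (i + 1) / (i + 1) := by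
    rw [hln32]; linarith
  rw [hS] at hub
  have h2 := Real.log_two_lt_d9
  rw [h23]
  norm_num at hub ⊢
  linarith

/-- The analytic heart: a good choice of `x` for each `p`. -/
lemma mtb_analytic_choice (p : ℝ) (hp0 : 0 < p) (hp1 : p ≤ 1) :
    ∃ x : ℝ, 0 < x ∧ x ≤ 1 ∧
      2 * Real.log (1 - p * (1 - x)) - p * Real.log x + p ^ 2 ≤ 0 := by
  have l2 := Real.log_two_lt_d9
  have l2' := Real.log_two_gt_d9
  rcases le_or_gt p (2/5) with hA | hA
  · -- x = 1/2
    refine ⟨1/2, by norm_num, by norm_num, ?_⟩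
    have hc0 : (0:ℝ) < 1 - p * (1 - 1/2) := by nlinarith
    have hc1 : 1 - p * (1 - 1/2) ≤ 1 := by nlinarith
    have hpade := neg_mtb_log_pade hc0 hc1
    have hD : (0:ℝ) < (1 - p * (1-1/2))^2 + 4*(1 - p * (1-1/2)) + 1 := by nlinarith
    have hxlog : Real.log (1/2 : ℝ) = -Real.log 2 := by rw [one_div, Real.log_inv]
    have hpoly : (p * 0.6931471808 + p ^ 2) * ((1 - p*(1-1/2))^2 + 4*(1 - p*(1-1/2)) + 1)
        ≤ 6 * (1 - (1 - p*(1-1/2))^2) := by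
      nlinarith [mul_pos hp0 hp0, mul_pos (mul_pos hp0 hp0) hp0, sq_nonneg (p - 2/5),
        mul_nonneg (mul_nonneg hp0.le hp0.le) (sub_nonneg.mpr hA)]
    have h6 : p * Real.log 2 + p ^ 2
        ≤ 6 * (1 - (1 - p*(1-1/2))^2) / ((1 - p*(1-1/2))^2 + 4*(1 - p*(1-1/2)) + 1) := by
      rw [le_div_iff₀ hD]
      calc (p * Real.log 2 + p ^ 2) * ((1 - p*(1-1/2))^2 + 4*(1 - p*(1-1/2)) + 1)
          ≤ (p * 0.6931471808 + p ^ 2) * ((1 - p*(1-1/2))^2 + 4*(1 - p*(1-1/2)) + 1) := by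
            apply mul_le_mul_of_nonneg_right _ hD.le
            nlinarith
        _ ≤ _ := hpoly
    have hdd : 6 * (1 - (1 - p*(1-1/2))^2) / ((1 - p*(1-1/2))^2 + 4*(1 - p*(1-1/2)) + 1)
        = 2 * (3 * (1 - (1 - p*(1-1/2))^2) / ((1 - p*(1-1/2))^2 + 4*(1 - p*(1-1/2)) + 1)) := by
      ring
    rw [hxlog]
    rw [hdd] at h6
    linarith
  · rcases le_or_gt p (3/5) with hB | hB
    · -- x = 1/3
      refine ⟨1/3, by norm_num, by norm_num, ?_⟩
      have hc0 : (0:ℝ) < 1 - p * (1 - 1/3) := by nlinarith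
      have hc1 : 1 - p * (1 - 1/3) ≤ 1 := by nlinarith
      have hpade := neg_mtb_log_pade hc0 hc1
      have l3 := mtb_log_three_lt
      have hD : (0:ℝ) < (1 - p * (1-1/3))^2 + 4*(1 - p * (1-1/3)) + 1 := by nlinarith
      have hxlog : Real.log (1/3 : ℝ) = -Real.log 3 := by rw [one_div, Real.log_inv]
      have hpoly : (p * 1.0989 + p ^ 2) * ((1 - p*(1-1/3))^2 + 4*(1 - p*(1-1/3)) + 1)
          ≤ 6 * (1 - (1 - p*(1-1/3))^2) := by
        nlinarith [sq_nonneg (p - 3/5), sq_nonneg (p - 2/5), mul_pos hp0 hp0,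
          mul_nonneg (mul_nonneg (sub_nonneg.mpr hA.le) (sub_nonneg.mpr hB)) hp0.le,
          mul_nonneg (sub_nonneg.mpr hA.le) (sub_nonneg.mpr hB)]
      have h6 : p * Real.log 3 + p ^ 2
          ≤ 6 * (1 - (1 - p*(1-1/3))^2) / ((1 - p*(1-1/3))^2 + 4*(1 - p*(1-1/3)) + 1) := by
        rw [le_div_iff₀ hD]
        calc (p * Real.log 3 + p ^ 2) * ((1 - p*(1-1/3))^2 + 4*(1 - p*(1-1/3)) + 1)
            ≤ (p * 1.0989 + p ^ 2) * ((1 - p*(1-1/3))^2 + 4*(1 - p*(1-1/3)) + 1) := by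
              apply mul_le_mul_of_nonneg_right _ hD.le
              nlinarith
          _ ≤ _ := hpoly
      have hdd : 6 * (1 - (1 - p*(1-1/3))^2) / ((1 - p*(1-1/3))^2 + 4*(1 - p*(1-1/3)) + 1)
          = 2 * (3 * (1 - (1 - p*(1-1/3))^2) / ((1 - p*(1-1/3))^2 + 4*(1 - p*(1-1/3)) + 1)) := by
        ring
      rw [hxlog]
      rw [hdd] at h6
      linarith
    · -- x = 1/4
      refine ⟨1/4, by norm_num, by norm_num, ?_⟩
      have hc0 : (0:ℝ) < 1 - p * (1 - 1/4) := by nlinarith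
      have hc1 : 1 - p * (1 - 1/4) ≤ 1 := by nlinarith
      have hpade := neg_mtb_log_pade hc0 hc1
      have hD : (0:ℝ) < (1 - p * (1-1/4))^2 + 4*(1 - p * (1-1/4)) + 1 := by nlinarith
      have hxlog : Real.log (1/4 : ℝ) = -(2 * Real.log 2) := by
        rw [show (1/4:ℝ) = ((2:ℝ)^2)⁻¹ by norm_num, Real.log_inv, Real.log_pow]
        push_cast; ring
      have hpoly : (p * (2 * 0.6931471808) + p ^ 2) * ((1 - p*(1-1/4))^2 + 4*(1 - p*(1-1/4)) + 1)
          ≤ 6 * (1 - (1 - p*(1-1/4))^2) := by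
        nlinarith [sq_nonneg (p - 3/5), sq_nonneg (p - 1), mul_pos hp0 hp0,
          mul_nonneg (mul_nonneg (sub_nonneg.mpr hB.le) (sub_nonneg.mpr hp1)) hp0.le,
          mul_nonneg (sub_nonneg.mpr hB.le) (sub_nonneg.mpr hp1)]
      have h6 : p * (2 * Real.log 2) + p ^ 2
          ≤ 6 * (1 - (1 - p*(1-1/4))^2) / ((1 - p*(1-1/4))^2 + 4*(1 - p*(1-1/4)) + 1) := by
        rw [le_div_iff₀ hD]
        calc (p * (2 * Real.log 2) + p ^ 2) * ((1 - p*(1-1/4))^2 + 4*(1 - p*(1-1/4)) + 1)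
            ≤ (p * (2 * 0.6931471808) + p ^ 2) * ((1 - p*(1-1/4))^2 + 4*(1 - p*(1-1/4)) + 1) := by
              apply mul_le_mul_of_nonneg_right _ hD.le
              nlinarith
          _ ≤ _ := hpoly
      have hdd : 6 * (1 - (1 - p*(1-1/4))^2) / ((1 - p*(1-1/4))^2 + 4*(1 - p*(1-1/4)) + 1)
          = 2 * (3 * (1 - (1 - p*(1-1/4))^2) / ((1 - p*(1-1/4))^2 + 4*(1 - p*(1-1/4)) + 1)) := by
        ring
      rw [hxlog]
      rw [hdd] at h6
      linarith


section MatrixPart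

variable {n : ℕ} {W : Matrix (Fin (n + 1)) (Fin (n + 1)) ℝ}

lemma mtb_pow_entry_nonneg (hnn : ∀ i j, 0 ≤ W i j) (t : ℕ) : ∀ i j, 0 ≤ (W ^ t) i j := by
  induction t with
  | zero =>
    intro i j
    rw [pow_zero]
    rcases eq_or_ne i j with h | h
    · rw [h, Matrix.one_apply_eq]; norm_num
    · rw [Matrix.one_apply_ne h]
  | succ t ih =>
    intro i j
    rw [pow_succ, Matrix.mul_apply]
    exact Finset.sum_nonneg fun k _ => mul_nonneg (ih i k) (hnn k j)

lemma mtb_pow_colsum (hcol : ∀ j, ∑ i, W i j = 1) (t : ℕ) : ∀ j, ∑ i, (W ^ t) i j = 1 := by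
  induction t with
  | zero =>
    intro j
    rw [pow_zero]
    rw [Finset.sum_eq_single_of_mem j (Finset.mem_univ j)
      (fun b _ hb => Matrix.one_apply_ne hb)]
    exact Matrix.one_apply_eq j
  | succ t ih =>
    intro j
    simp only [pow_succ, Matrix.mul_apply]
    rw [Finset.sum_comm]
    calc ∑ k, ∑ i, (W ^ t) i k * W k j
        = ∑ k, (∑ i, (W ^ t) i k) * W k j := by
          apply Finset.sum_congr rfl
          intro k _
          rw [Finset.sum_mul]
      _ = ∑ k, W k j := by
          apply Finset.sum_congr rfl
          intro k _
          rw [ih k, one_mul]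
      _ = 1 := hcol j

lemma mtb_pow_ff (hff : ∀ i j, i < j → W i j = 0) (t : ℕ) :
    ∀ i j : Fin (n + 1), i < j → (W ^ t) i j = 0 := by
  induction t with
  | zero =>
    intro i j hij
    rw [pow_zero]
    exact Matrix.one_apply_ne (ne_of_lt hij)
  | succ t ih =>
    intro i j hij
    rw [pow_succ, Matrix.mul_apply]
    apply Finset.sum_eq_zero
    intro k _
    rcases lt_or_ge i k with h | h
    · rw [ih i k h, zero_mul]
    · rw [hff k j (lt_of_le_of_lt h hij), mul_zero]

/-- One-step potential contraction for a non-sink column. -/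
lemma mtb_one_step (hnn : ∀ i j, 0 ≤ W i j) (hcol : ∀ j, ∑ i, W i j = 1)
    (hff : ∀ i j, i < j → W i j = 0)
    {p : ℝ}
    (hfwd : ∀ j : Fin (n + 1), j ≠ Fin.last n →
      p ≤ ∑ i ∈ Finset.univ.filter (fun i => j < i), W i j)
    {x : ℝ} (hx0 : 0 < x) (hx1 : x ≤ 1)
    {j : Fin (n + 1)} (hj : j ≠ Fin.last n) :
    ∑ m : Fin (n+1), x ^ (m : ℕ) * W m j ≤ (1 - p * (1 - x)) * x ^ (j : ℕ) := by
  classical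
  set q : ℝ := ∑ m ∈ Finset.univ.filter (fun m => j < m), W m j with hq
  have hpq : p ≤ q := hfwd j hj
  have hrest : ∑ m ∈ Finset.univ.filter (fun m => ¬ j < m), W m j = W j j := by
    apply Finset.sum_eq_single_of_mem
    · simp [lt_irrefl]
    · intro m hm hmj
      simp only [Finset.mem_filter, Finset.mem_univ, true_and, not_lt] at hm
      exact hff m j (lt_of_le_of_ne hm hmj)
  have hWjj : W j j = 1 - q := by
    have hsplit := Finset.sum_filter_add_sum_filter_not Finset.univ (fun m => j < m)
      (fun m => W m j)
    rw [hrest, hcol j] at hsplit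
    linarith [hsplit]
  have hxrest : ∑ m ∈ Finset.univ.filter (fun m => ¬ j < m), x ^ (m : ℕ) * W m j
      = x ^ (j : ℕ) * W j j := by
    apply Finset.sum_eq_single_of_mem
    · simp [lt_irrefl]
    · intro m hm hmj
      simp only [Finset.mem_filter, Finset.mem_univ, true_and, not_lt] at hm
      rw [hff m j (lt_of_le_of_ne hm hmj), mul_zero]
  have hxsplit := Finset.sum_filter_add_sum_filter_not Finset.univ (fun m => j < m)
      (fun m => x ^ (m : ℕ) * W m j)
  have hbound : ∑ m ∈ Finset.univ.filter (fun m => j < m), x ^ (m : ℕ) * W m j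
      ≤ x ^ ((j : ℕ) + 1) * q := by
    rw [hq, Finset.mul_sum]
    apply Finset.sum_le_sum
    intro m hm
    simp only [Finset.mem_filter, Finset.mem_univ, true_and] at hm
    have hmv : (j : ℕ) + 1 ≤ (m : ℕ) := Nat.succ_le_of_lt (Fin.lt_def.mp hm)
    exact mul_le_mul_of_nonneg_right (pow_le_pow_of_le_one hx0.le hx1 hmv) (hnn m j)
  have hxj : (0:ℝ) ≤ x ^ (j : ℕ) := pow_nonneg hx0.le _
  have hxs : x ^ ((j : ℕ) + 1) = x ^ (j : ℕ) * x := pow_succ x _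
  have hfinal : x ^ (j:ℕ) * W j j + x ^ ((j:ℕ)+1) * q ≤ (1 - p * (1 - x)) * x ^ (j : ℕ) := by
    rw [hWjj, hxs]
    nlinarith [mul_nonneg (mul_nonneg hxj (sub_nonneg.mpr hx1)) (sub_nonneg.mpr hpq)]
  calc ∑ m : Fin (n+1), x ^ (m : ℕ) * W m j
      = ∑ m ∈ Finset.univ.filter (fun m => j < m), x ^ (m : ℕ) * W m j
        + x ^ (j : ℕ) * W j j := by rw [← hxsplit, hxrest]
    _ ≤ x ^ ((j:ℕ)+1) * q + x ^ (j : ℕ) * W j j := by linarith [hbound]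
    _ ≤ (1 - p * (1 - x)) * x ^ (j : ℕ) := by linarith [hfinal]

/-- The key potential estimate for powers. -/
lemma mtb_key_sum (hnn : ∀ i j, 0 ≤ W i j) (hcol : ∀ j, ∑ i, W i j = 1)
    (hff : ∀ i j, i < j → W i j = 0)
    {p : ℝ} (hp0 : 0 < p) (hp1 : p ≤ 1)
    (hfwd : ∀ j : Fin (n + 1), j ≠ Fin.last n →
      p ≤ ∑ i ∈ Finset.univ.filter (fun i => j < i), W i j)
    {x : ℝ} (hx0 : 0 < x) (hx1 : x ≤ 1) :
    ∀ t (j : Fin (n + 1)),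
      ∑ k ∈ Finset.univ.erase (Fin.last n), x ^ (k : ℕ) * (W ^ t) k j
        ≤ (1 - p * (1 - x)) ^ t * x ^ (j : ℕ) := by
  have hc0 : (0:ℝ) < 1 - p * (1 - x) := by nlinarith
  intro t
  induction t with
  | zero =>
    intro j
    rw [pow_zero, pow_zero, one_mul]
    by_cases hj : j = Fin.last n
    · subst hj
      have hz : ∑ k ∈ Finset.univ.erase (Fin.last n), x ^ (k : ℕ) * (1 : Matrix (Fin (n+1)) (Fin (n+1)) ℝ) k (Fin.last n) = 0 := by
        apply Finset.sum_eq_zero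
        intro k hk
        rw [Matrix.one_apply_ne (Finset.ne_of_mem_erase hk), mul_zero]
      rw [hz]
      positivity
    · rw [Finset.sum_eq_single_of_mem j
        (Finset.mem_erase.mpr ⟨hj, Finset.mem_univ j⟩)
        (fun b _ hb => by rw [Matrix.one_apply_ne hb, mul_zero])]
      rw [Matrix.one_apply_eq, mul_one]
  | succ t ih =>
    intro j
    by_cases hj : j = Fin.last n
    · subst hj
      have hz : ∑ k ∈ Finset.univ.erase (Fin.last n), x ^ (k : ℕ) * (W ^ (t+1)) k (Fin.last n) = 0 := by
        apply Finset.sum_eq_zero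
        intro k hk
        have hkl : k < Fin.last n :=
          lt_of_le_of_ne (Fin.le_last k) (Finset.ne_of_mem_erase hk)
        rw [mtb_pow_ff hff (t+1) k (Fin.last n) hkl, mul_zero]
      rw [hz]
      positivity
    · have hrw : ∑ k ∈ Finset.univ.erase (Fin.last n), x ^ (k : ℕ) * (W ^ (t+1)) k j
          = ∑ m : Fin (n+1), (∑ k ∈ Finset.univ.erase (Fin.last n), x ^ (k : ℕ) * (W ^ t) k m) * W m j := by
        simp only [pow_succ, Matrix.mul_apply, Finset.mul_sum]
        rw [Finset.sum_comm]
        apply Finset.sum_congr rfl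
        intro m _
        rw [Finset.sum_mul]
        apply Finset.sum_congr rfl
        intro k _
        ring
      rw [hrw]
      calc ∑ m : Fin (n+1), (∑ k ∈ Finset.univ.erase (Fin.last n), x ^ (k : ℕ) * (W ^ t) k m) * W m j
          ≤ ∑ m : Fin (n+1), ((1 - p * (1 - x)) ^ t * x ^ (m : ℕ)) * W m j := by
            apply Finset.sum_le_sum
            intro m _
            exact mul_le_mul_of_nonneg_right (ih m) (hnn m j)
        _ = (1 - p * (1 - x)) ^ t * ∑ m : Fin (n+1), x ^ (m : ℕ) * W m j := by
            rw [Finset.mul_sum]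
            apply Finset.sum_congr rfl
            intro m _
            ring
        _ ≤ (1 - p * (1 - x)) ^ t * ((1 - p * (1 - x)) * x ^ (j : ℕ)) := by
            apply mul_le_mul_of_nonneg_left (mtb_one_step hnn hcol hff hfwd hx0 hx1 hj)
            positivity
        _ = (1 - p * (1 - x)) ^ (t+1) * x ^ (j : ℕ) := by ring

end MatrixPart


/-- **Multi-head mixing time bound via forward moves (quantitative form).**
`W` is an `(n+1) × (n+1)` column-stochastic feedforward matrix (sink `Fin.last n`, so
`N = n` forward moves suffice) whose one-step forward probability from every non-sink node
is at least `p`.  Then for every `t` with `t * p ≥ 2 * n` and every start `j`, the mass at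
the sink satisfies `(W ^ t) (Fin.last n) j ≥ 1 - exp (-(p * n))`; equivalently the total
variation distance to the stationary distribution `e_n`, which equals
`1 - (W ^ t) (Fin.last n) j`, is at most `exp (-(p * n))`. -/
theorem mixing_time_bound_via_forward_moves
    (n : ℕ) (p : ℝ) (hp0 : 0 < p) (hp1 : p ≤ 1)
    (W : Matrix (Fin (n + 1)) (Fin (n + 1)) ℝ)
    (hnonneg : ∀ i j, 0 ≤ W i j)
    (hcol : ∀ j, ∑ i, W i j = 1)
    (hff : ∀ i j, i < j → W i j = 0)
    (hfwd : ∀ j : Fin (n + 1), j ≠ Fin.last n →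
      p ≤ ∑ i ∈ Finset.univ.filter (fun i => j < i), W i j) :
    ∀ (t : ℕ), 2 * (n : ℝ) ≤ (t : ℝ) * p → ∀ j : Fin (n + 1),
      1 - Real.exp (-(p * (n : ℝ))) ≤ (W ^ t) (Fin.last n) j ∧
      (1 / 2) * ∑ i, |(W ^ t) i j - (Pi.single (Fin.last n) 1 : Fin (n + 1) → ℝ) i| =
        1 - (W ^ t) (Fin.last n) j ∧
      (1 / 2) * ∑ i, |(W ^ t) i j - (Pi.single (Fin.last n) 1 : Fin (n + 1) → ℝ) i| ≤
        Real.exp (-(p * (n : ℝ))) := by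
  have pow_entry_nonneg : ∀ (t : ℕ) (i j : Fin (n+1)), 0 ≤ (W ^ t) i j :=
    fun t => mtb_pow_entry_nonneg hnonneg t
  have pow_colsum : ∀ (t : ℕ) (j : Fin (n+1)), ∑ i, (W ^ t) i j = 1 :=
    fun t => mtb_pow_colsum hcol t
  have key_sum : ∀ (x : ℝ), 0 < x → x ≤ 1 → ∀ (t : ℕ) (j : Fin (n + 1)),
      ∑ k ∈ Finset.univ.erase (Fin.last n), x ^ (k : ℕ) * (W ^ t) k j
        ≤ (1 - p * (1 - x)) ^ t * x ^ (j : ℕ) :=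
    fun x hx0 hx1 => mtb_key_sum hnonneg hcol hff hp0 hp1 hfwd hx0 hx1
  have analytic_choice := mtb_analytic_choice p hp0 hp1
  intro t ht j
  set a := (W ^ t) (Fin.last n) j with ha
  have ha1 : a ≤ 1 := by
    have h := Finset.single_le_sum (f := fun i => (W ^ t) i j)
      (fun i _ => pow_entry_nonneg t i j) (Finset.mem_univ (Fin.last n))
    rw [pow_colsum t j] at h
    exact h
  have hrest : ∑ k ∈ Finset.univ.erase (Fin.last n), (W ^ t) k j = 1 - a := by
    have h := Finset.sum_erase_add Finset.univ (fun k => (W ^ t) k j)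
      (Finset.mem_univ (Fin.last n))
    rw [pow_colsum t j] at h
    linarith [h]
  obtain ⟨x, hx0, hx1, hkey⟩ := analytic_choice
  have hc0 : (0:ℝ) < 1 - p * (1 - x) := by nlinarith
  have hc1 : (1:ℝ) - p * (1 - x) ≤ 1 := by nlinarith
  have hS := key_sum x hx0 hx1 t j
  have hstep1 : (1 - a) * x ^ n ≤ x * ((1 - p*(1-x)) ^ t * x ^ (j:ℕ)) := by
    rw [← hrest, Finset.sum_mul]
    calc ∑ k ∈ Finset.univ.erase (Fin.last n), (W ^ t) k j * x ^ n
        ≤ ∑ k ∈ Finset.univ.erase (Fin.last n), x * (x ^ (k:ℕ) * (W ^ t) k j) := by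
          apply Finset.sum_le_sum
          intro k hk
          have hne : k ≠ Fin.last n := Finset.ne_of_mem_erase hk
          have hkn : (k:ℕ) + 1 ≤ n := by
            have h1 : (k:ℕ) < n + 1 := k.isLt
            have h2 : (k:ℕ) ≠ n := by
              intro h
              exact hne (Fin.ext (by rw [h, Fin.val_last]))
            omega
          have hpow : x ^ n ≤ x ^ ((k:ℕ)+1) := pow_le_pow_of_le_one hx0.le hx1 hkn
          calc (W ^ t) k j * x ^ n
              ≤ (W ^ t) k j * x ^ ((k:ℕ)+1) :=
                mul_le_mul_of_nonneg_left hpow (pow_entry_nonneg t k j)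
            _ = x * (x ^ (k:ℕ) * (W ^ t) k j) := by rw [pow_succ]; ring
      _ = x * ∑ k ∈ Finset.univ.erase (Fin.last n), x ^ (k:ℕ) * (W ^ t) k j := by
          rw [Finset.mul_sum]
      _ ≤ x * ((1 - p*(1-x)) ^ t * x ^ (j:ℕ)) := mul_le_mul_of_nonneg_left hS hx0.le
  have hxj1 : x ^ (j:ℕ) ≤ 1 := pow_le_one₀ hx0.le hx1
  have hstep2 : x * ((1 - p*(1-x)) ^ t * x ^ (j:ℕ)) ≤ x * (1 - p*(1-x)) ^ t := by
    have h := mul_le_mul_of_nonneg_left hxj1 (pow_nonneg hc0.le t)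
    rw [mul_one] at h
    exact mul_le_mul_of_nonneg_left h hx0.le
  have hE : x * (1 - p*(1-x)) ^ t ≤ Real.exp (-(p * n)) * x ^ n := by
    have hA : Real.log (1 - p*(1-x)) ≤ 0 := Real.log_nonpos hc0.le hc1
    have hB : Real.log x ≤ 0 := Real.log_nonpos hx0.le hx1
    have e1 : x * (1 - p*(1-x)) ^ t = Real.exp (Real.log x + t * Real.log (1 - p*(1-x))) := by
      rw [Real.exp_add, Real.exp_log hx0, ← Real.log_pow, Real.exp_log (pow_pos hc0 t)]
    have e2 : Real.exp (-(p * n)) * x ^ n = Real.exp (-(p * n) + n * Real.log x) := by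
      rw [Real.exp_add, ← Real.log_pow, Real.exp_log (pow_pos hx0 n)]
    rw [e1, e2]
    apply Real.exp_le_exp.mpr
    have ht' : 2 * (n:ℝ) / p ≤ t := by rw [div_le_iff₀ hp0]; linarith
    have h1 : (t:ℝ) * Real.log (1 - p*(1-x)) ≤ (2 * (n:ℝ) / p) * Real.log (1 - p*(1-x)) :=
      mul_le_mul_of_nonpos_right ht' hA
    have h2 : (2 * (n:ℝ) / p) * Real.log (1 - p*(1-x)) ≤ (n:ℝ) * Real.log x - p * n := by
      have h3 := mul_le_mul_of_nonneg_left hkey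
        (show (0:ℝ) ≤ (n:ℝ)/p from div_nonneg (Nat.cast_nonneg n) hp0.le)
      rw [mul_zero] at h3
      have h4 : (n:ℝ)/p * (2 * Real.log (1 - p*(1-x)) - p * Real.log x + p^2)
          = (2*(n:ℝ)/p) * Real.log (1 - p*(1-x)) - n * Real.log x + p * n := by
        field_simp
      rw [h4] at h3
      linarith
    linarith
  have hxn : (0:ℝ) < x ^ n := pow_pos hx0 n
  have hfail : 1 - a ≤ Real.exp (-(p * n)) := by
    have hchain : (1 - a) * x ^ n ≤ Real.exp (-(p * n)) * x ^ n :=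
      le_trans hstep1 (le_trans hstep2 hE)
    exact le_of_mul_le_mul_right hchain hxn
  have hTV : ∑ i, |(W ^ t) i j - (Pi.single (Fin.last n) 1 : Fin (n+1) → ℝ) i|
      = 2 * (1 - a) := by
    have hsplit : (∑ i ∈ Finset.univ.erase (Fin.last n),
          |(W ^ t) i j - (Pi.single (Fin.last n) 1 : Fin (n+1) → ℝ) i|)
        + |(W ^ t) (Fin.last n) j - (Pi.single (Fin.last n) 1 : Fin (n+1) → ℝ) (Fin.last n)|
        = ∑ i, |(W ^ t) i j - (Pi.single (Fin.last n) 1 : Fin (n+1) → ℝ) i| :=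
      Finset.sum_erase_add _ _ (Finset.mem_univ _)
    have hlast : |(W ^ t) (Fin.last n) j
        - (Pi.single (Fin.last n) 1 : Fin (n+1) → ℝ) (Fin.last n)| = 1 - a := by
      rw [Pi.single_eq_same, ← ha]
      rw [abs_of_nonpos (by linarith)]
      ring
    have hothers : ∑ i ∈ Finset.univ.erase (Fin.last n),
        |(W ^ t) i j - (Pi.single (Fin.last n) 1 : Fin (n+1) → ℝ) i| = 1 - a := by
      have hcg : ∀ i ∈ Finset.univ.erase (Fin.last n),
          |(W ^ t) i j - (Pi.single (Fin.last n) 1 : Fin (n+1) → ℝ) i| = (W ^ t) i j := by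
        intro i hi
        rw [Pi.single_eq_of_ne (Finset.ne_of_mem_erase hi), sub_zero]
        exact abs_of_nonneg (pow_entry_nonneg t i j)
      rw [Finset.sum_congr rfl hcg, hrest]
    rw [← hsplit, hothers, hlast]
    ring
  refine ⟨by linarith, ?_, ?_⟩
  · rw [hTV]; ring
  · rw [hTV]; linarith
end

section
/- There exist 3 × 3 real matrices Δ1, Δ2, each row-stochastic (nonnegative entries, every row sums to 1), lower triangular ((Δh)_{ij} = 0 for i < j), and with strictly positive diagonal entries (self-loops), such that sup_{t ∈ ℕ} ((Δ1)^t)_{3,1} = 0 and sup_{t ∈ ℕ} ((Δ2)^t)_{3,1} = 0, yet the uniform combination Δ̄ = (1/2)·Δ1 + (1/2)·Δ2 satisfies sup_{t ∈ ℕ} ((Δ̄)^t)_{3,1} > 0. -/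
open Matrix Finset

private lemma pow_stoch {A : Matrix (Fin 3) (Fin 3) ℝ}
    (h0 : ∀ i j, 0 ≤ A i j) (h1 : ∀ i, ∑ j, A i j = 1) (t : ℕ) :
    (∀ i j, 0 ≤ (A ^ t) i j) ∧ (∀ i, ∑ j, (A ^ t) i j = 1) := by
  induction t with
  | zero =>
    constructor
    · intro i j
      by_cases h : i = j <;> simp [Matrix.one_apply, h]
    · intro i; simp [Matrix.one_apply]
  | succ n ih =>
    rw [pow_succ]
    constructor
    · intro i j
      rw [Matrix.mul_apply]
      exact Finset.sum_nonneg fun k _ => mul_nonneg (ih.1 i k) (h0 k j)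
    · intro i
      simp only [Matrix.mul_apply]
      rw [Finset.sum_comm]
      calc ∑ k, ∑ j, (A ^ n) i k * A k j
          = ∑ k, (A ^ n) i k * ∑ j, A k j := by
            simp [Finset.mul_sum]
        _ = ∑ k, (A ^ n) i k := by simp [h1]
        _ = 1 := ih.2 i

/-- **Trivial multi-head fidelity synergy.**
There exist two `3 × 3` row-stochastic lower-triangular diffusion matrices with strictly
positive diagonals (self-loops) such that each head alone has zero fidelity from node `1`
(index `0`) to the sink (index `2`), i.e. `sup_t ((Δh)^t)_{3,1} = 0`, while the uniform
combination `(1/2)•Δ1 + (1/2)•Δ2` has strictly positive fidelity from that node. -/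
theorem exists_heads_with_zero_fidelity_but_positive_combined_fidelity :
    ∃ Δ1 Δ2 : Matrix (Fin 3) (Fin 3) ℝ,
      (∀ i j, 0 ≤ Δ1 i j) ∧ (∀ i, ∑ j, Δ1 i j = 1) ∧
      (∀ i j : Fin 3, i < j → Δ1 i j = 0) ∧ (∀ i, 0 < Δ1 i i) ∧
      (∀ i j, 0 ≤ Δ2 i j) ∧ (∀ i, ∑ j, Δ2 i j = 1) ∧
      (∀ i j : Fin 3, i < j → Δ2 i j = 0) ∧ (∀ i, 0 < Δ2 i i) ∧
      (⨆ t : ℕ, (Δ1 ^ t) 2 0) = 0 ∧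
      (⨆ t : ℕ, (Δ2 ^ t) 2 0) = 0 ∧
      0 < ⨆ t : ℕ, (((1/2 : ℝ) • Δ1 + (1/2 : ℝ) • Δ2) ^ t) 2 0 := by
  refine ⟨!![1,0,0; 1/2,1/2,0; 0,0,1], !![1,0,0; 0,1,0; 0,1/2,1/2], ?_, ?_, ?_, ?_, ?_, ?_, ?_, ?_, ?_, ?_, ?_⟩
  · intro i j; fin_cases i <;> fin_cases j <;> norm_num
  · intro i; fin_cases i <;> simp [Fin.sum_univ_three] <;> norm_num
  · intro i j h; fin_cases i <;> fin_cases j <;> simp_all <;> norm_num at h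
  · intro i; fin_cases i <;> norm_num
  · intro i j; fin_cases i <;> fin_cases j <;> norm_num
  · intro i; fin_cases i <;> simp [Fin.sum_univ_three] <;> norm_num
  · intro i j h; fin_cases i <;> fin_cases j <;> simp_all <;> norm_num at h
  · intro i; fin_cases i <;> norm_num
  · have hz : ∀ t : ℕ, ((!![1,0,0; 1/2,1/2,0; 0,0,1] : Matrix (Fin 3) (Fin 3) ℝ) ^ t) 2 0 = 0 := by
      intro t
      induction t with
      | zero => simp [Matrix.one_apply]
      | succ n ih =>
        rw [pow_succ', Matrix.mul_apply, Fin.sum_univ_three]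
        norm_num [Matrix.vecHead, Matrix.vecTail, ih, Matrix.cons_val_two]
    simp only [hz]
    exact ciSup_const
  · have hz : ∀ t : ℕ, ((!![1,0,0; 0,1,0; 0,1/2,1/2] : Matrix (Fin 3) (Fin 3) ℝ) ^ t) 2 0 = 0 := by
      intro t
      induction t with
      | zero => simp [Matrix.one_apply]
      | succ n ih =>
        rw [pow_succ, Matrix.mul_apply, Fin.sum_univ_three]
        norm_num [Matrix.vecHead, Matrix.vecTail, ih, Matrix.cons_val_two]
    simp only [hz]
    exact ciSup_const
  · set B : Matrix (Fin 3) (Fin 3) ℝ :=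
      (1/2 : ℝ) • !![1,0,0; 1/2,1/2,0; 0,0,1] + (1/2 : ℝ) • !![1,0,0; 0,1,0; 0,1/2,1/2] with hB
    have hB0 : ∀ i j, 0 ≤ B i j := by
      intro i j; fin_cases i <;> fin_cases j <;> simp [hB] <;> norm_num
    have hB1 : ∀ i, ∑ j, B i j = 1 := by
      intro i; fin_cases i <;> simp [hB, Fin.sum_univ_three] <;> norm_num
    have hbdd : BddAbove (Set.range fun t : ℕ => (B ^ t) 2 0) := by
      refine ⟨1, ?_⟩
      rintro x ⟨t, rfl⟩
      have := (pow_stoch hB0 hB1 t).2 2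
      calc (B ^ t) 2 0 ≤ ∑ j, (B ^ t) 2 j :=
            Finset.single_le_sum (fun j _ => (pow_stoch hB0 hB1 t).1 2 j) (Finset.mem_univ 0)
        _ = 1 := this
    have h2 : (B ^ 2) 2 0 = 1/16 := by
      rw [pow_two, Matrix.mul_apply, Fin.sum_univ_three]
      simp [hB]
      norm_num
    have := le_ciSup hbdd 2
    rw [h2] at this
    linarith
end

section
/- Let Δ1 and Δ2 be the 4 × 4 real matrices (nodes ordered (u, v, w, τ)) Δ1 = [[1,0,0,0],[1/2,1/2,0,0],[0,1/2,1/2,0],[0,0,1/2,1/2]] and Δ2 = [[1/2,1/2,0,0],[0,1,0,0],[1/2,0,1/2,0],[0,0,1/2,1/2]]. Then the minimax fidelity of each head over the non-sink nodes equals 3/8: min over j ∈ {u, v, w} of sup_{t ∈ ℕ} ((Δ1)^t)_{τ,j} = 3/8, and min over j ∈ {u, v, w} of sup_{t ∈ ℕ} ((Δ2)^t)_{τ,j} = 3/8. -/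
/-- Closed form for row 3 of powers of the first diffusion matrix. -/
lemma four_node_row1 (t : ℕ) :
    ((!![1, 0, 0, 0; 1/2, 1/2, 0, 0; 0, 1/2, 1/2, 0; 0, 0, 1/2, 1/2] :
        Matrix (Fin 4) (Fin 4) ℝ) ^ t) 3 0
        = 1 - ((t : ℝ) * ((t : ℝ) - 1) / 2 + t + 1) * (1/2)^t ∧
    ((!![1, 0, 0, 0; 1/2, 1/2, 0, 0; 0, 1/2, 1/2, 0; 0, 0, 1/2, 1/2] :
        Matrix (Fin 4) (Fin 4) ℝ) ^ t) 3 1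
        = ((t : ℝ) * ((t : ℝ) - 1) / 2) * (1/2)^t ∧
    ((!![1, 0, 0, 0; 1/2, 1/2, 0, 0; 0, 1/2, 1/2, 0; 0, 0, 1/2, 1/2] :
        Matrix (Fin 4) (Fin 4) ℝ) ^ t) 3 2 = (t : ℝ) * (1/2)^t ∧
    ((!![1, 0, 0, 0; 1/2, 1/2, 0, 0; 0, 1/2, 1/2, 0; 0, 0, 1/2, 1/2] :
        Matrix (Fin 4) (Fin 4) ℝ) ^ t) 3 3 = (1/2)^t := by
  induction t with
  | zero => simp [Matrix.one_apply]
  | succ n ih =>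
    obtain ⟨h0, h1, h2, h3⟩ := ih
    rw [pow_succ]
    refine ⟨?_, ?_, ?_, ?_⟩ <;>
      simp only [Matrix.mul_apply, Fin.sum_univ_four, h0, h1, h2, h3] <;>
      norm_num [Matrix.cons_val_zero, Matrix.cons_val_one, Matrix.head_cons,
        Matrix.cons_val_two, Matrix.cons_val_three, Matrix.vecHead, Matrix.vecTail] <;>
      push_cast <;> ring

/-- Closed form for row 3 of powers of the second diffusion matrix. -/
lemma four_node_row2 (t : ℕ) :
    ((!![1/2, 1/2, 0, 0; 0, 1, 0, 0; 1/2, 0, 1/2, 0; 0, 0, 1/2, 1/2] :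
        Matrix (Fin 4) (Fin 4) ℝ) ^ t) 3 0
        = ((t : ℝ) * ((t : ℝ) - 1) / 2) * (1/2)^t ∧
    ((!![1/2, 1/2, 0, 0; 0, 1, 0, 0; 1/2, 0, 1/2, 0; 0, 0, 1/2, 1/2] :
        Matrix (Fin 4) (Fin 4) ℝ) ^ t) 3 1
        = 1 - ((t : ℝ) * ((t : ℝ) - 1) / 2 + t + 1) * (1/2)^t ∧
    ((!![1/2, 1/2, 0, 0; 0, 1, 0, 0; 1/2, 0, 1/2, 0; 0, 0, 1/2, 1/2] :
        Matrix (Fin 4) (Fin 4) ℝ) ^ t) 3 2 = (t : ℝ) * (1/2)^t ∧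
    ((!![1/2, 1/2, 0, 0; 0, 1, 0, 0; 1/2, 0, 1/2, 0; 0, 0, 1/2, 1/2] :
        Matrix (Fin 4) (Fin 4) ℝ) ^ t) 3 3 = (1/2)^t := by
  induction t with
  | zero => simp [Matrix.one_apply]
  | succ n ih =>
    obtain ⟨h0, h1, h2, h3⟩ := ih
    rw [pow_succ]
    refine ⟨?_, ?_, ?_, ?_⟩ <;>
      simp only [Matrix.mul_apply, Fin.sum_univ_four, h0, h1, h2, h3] <;>
      norm_num [Matrix.cons_val_zero, Matrix.cons_val_one, Matrix.head_cons,
        Matrix.cons_val_two, Matrix.cons_val_three, Matrix.vecHead, Matrix.vecTail] <;>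
      push_cast <;> ring

lemma four_node_natkey : ∀ t : ℕ, 4 * (t * (t - 1)) ≤ 3 * 2 ^ t := by
  intro t
  induction t with
  | zero => norm_num
  | succ n ih =>
    rcases Nat.lt_or_ge n 3 with h | h
    · interval_cases n <;> norm_num
    · obtain ⟨m, rfl⟩ : ∃ m, n = m + 1 := ⟨n - 1, by omega⟩
      have h1 : 4 * ((m + 1 + 1) * (m + 1 + 1 - 1)) ≤ 2 * (4 * ((m + 1) * (m + 1 - 1))) := by
        simp only [Nat.add_sub_cancel]
        nlinarith [h]
      calc 4 * ((m + 1 + 1) * (m + 1 + 1 - 1)) ≤ 2 * (4 * ((m + 1) * (m + 1 - 1))) := h1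
        _ ≤ 2 * (3 * 2 ^ (m + 1)) := by omega
        _ = 3 * 2 ^ (m + 1 + 1) := by ring

/-- The sequence `t(t-1)/2 · (1/2)^t` is bounded by `3/8`. -/
lemma four_node_key (t : ℕ) : ((t : ℝ) * ((t : ℝ) - 1) / 2) * (1/2)^t ≤ 3/8 := by
  rcases t with _ | n
  · norm_num
  · have h := four_node_natkey (n + 1)
    have h' : 4 * (((n : ℝ) + 1) * n) ≤ 3 * 2 ^ (n + 1) := by
      have : ((4 * ((n + 1) * (n + 1 - 1)) : ℕ) : ℝ) ≤ ((3 * 2 ^ (n + 1) : ℕ) : ℝ) := by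
        exact_mod_cast h
      push_cast [Nat.add_sub_cancel] at this
      linarith
    have h2 : (0 : ℝ) < 2 ^ (n + 1) := by positivity
    have hpow : ((1 : ℝ)/2) ^ (n + 1) = 1 / 2 ^ (n + 1) := by
      rw [div_pow, one_pow]
    rw [hpow]
    push_cast
    have h'' : 4 * (((n : ℝ) + 1) * n) ≤ 6 * 2 ^ n := by
      rw [pow_succ] at h'; linarith
    rw [div_mul_div_comm, div_le_div_iff₀ (by positivity) (by norm_num)]
    ring_nf
    nlinarith [h'']

lemma four_node_t_le (t : ℕ) : (t : ℝ) * (1/2)^t ≤ 1 := by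
  have h : (t : ℝ) ≤ 2 ^ t := by
    exact_mod_cast (Nat.lt_two_pow_self (n := t)).le
  have h2 : (0 : ℝ) < 2 ^ t := by positivity
  have hpow : ((1 : ℝ)/2) ^ t = 1 / 2 ^ t := by rw [div_pow, one_pow]
  rw [hpow, mul_one_div, div_le_one h2]
  exact h

/-- **Individual minimax fidelities in the 4-node example.**
Nodes are ordered `(u, v, w, τ) = (0, 1, 2, 3)` with sink `τ = 3`.  Head 1 has edges
`u → v, v → w, w → τ` plus self-loops; head 2 has edges `v → u, u → w, w → τ` plus
self-loops.  For each head, the minimax fidelity over the non-sink nodes — the minimum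
over `j ∈ {u, v, w}` of the peak signal `sup_t ((Δh)^t)_{τ,j}` — equals `3/8`. -/
theorem four_node_individual_minimax_fidelity
    (Δ1 Δ2 : Matrix (Fin 4) (Fin 4) ℝ)
    (hΔ1 : Δ1 = !![1, 0, 0, 0; 1/2, 1/2, 0, 0; 0, 1/2, 1/2, 0; 0, 0, 1/2, 1/2])
    (hΔ2 : Δ2 = !![1/2, 1/2, 0, 0; 0, 1, 0, 0; 1/2, 0, 1/2, 0; 0, 0, 1/2, 1/2]) :
    min (⨆ t : ℕ, (Δ1 ^ t) 3 0)
      (min (⨆ t : ℕ, (Δ1 ^ t) 3 1) (⨆ t : ℕ, (Δ1 ^ t) 3 2)) = 3/8 ∧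
    min (⨆ t : ℕ, (Δ2 ^ t) 3 0)
      (min (⨆ t : ℕ, (Δ2 ^ t) 3 1) (⨆ t : ℕ, (Δ2 ^ t) 3 2)) = 3/8 := by
  subst hΔ1 hΔ2
  -- suprema of the three explicit sequences
  have hsupB : (⨆ t : ℕ, ((t : ℝ) * ((t : ℝ) - 1) / 2) * (1/2)^t) = 3/8 := by
    apply le_antisymm
    · exact ciSup_le four_node_key
    · have hb : BddAbove (Set.range fun t : ℕ => ((t : ℝ) * ((t : ℝ) - 1) / 2) * (1/2)^t) :=
        ⟨3/8, by rintro x ⟨t, rfl⟩; exact four_node_key t⟩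
      calc (3:ℝ)/8 = ((3 : ℕ) : ℝ) * (((3:ℕ) : ℝ) - 1) / 2 * (1/2)^(3:ℕ) := by norm_num
        _ ≤ _ := le_ciSup hb 3
  have hsupA_ge : (3:ℝ)/8 ≤ ⨆ t : ℕ, 1 - ((t : ℝ) * ((t : ℝ) - 1) / 2 + t + 1) * (1/2)^t := by
    have hbdd : BddAbove (Set.range fun t : ℕ =>
        1 - ((t : ℝ) * ((t : ℝ) - 1) / 2 + t + 1) * (1/2)^t) := by
      refine ⟨1, ?_⟩
      rintro x ⟨t, rfl⟩
      have : (0:ℝ) ≤ ((t : ℝ) * ((t : ℝ) - 1) / 2 + t + 1) * (1/2)^t := by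
        have ht1 : (0:ℝ) ≤ (t : ℝ) * ((t : ℝ) - 1) := by
          rcases t with _ | n
          · norm_num
          · push_cast; nlinarith [Nat.cast_nonneg (α := ℝ) n]
        positivity
      simp only []
      linarith [this]
    calc (3:ℝ)/8 ≤ 1 - (((5:ℕ) : ℝ) * (((5:ℕ) : ℝ) - 1) / 2 + (5:ℕ) + 1) * (1/2)^(5:ℕ) := by
          norm_num
      _ ≤ _ := le_ciSup hbdd 5
  have hsupC_ge : (3:ℝ)/8 ≤ ⨆ t : ℕ, (t : ℝ) * (1/2)^t := by
    have hb : BddAbove (Set.range fun t : ℕ => (t : ℝ) * (1/2)^t) :=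
      ⟨1, by rintro x ⟨t, rfl⟩; exact four_node_t_le t⟩
    calc (3:ℝ)/8 ≤ ((1:ℕ) : ℝ) * (1/2)^(1:ℕ) := by norm_num
      _ ≤ _ := le_ciSup hb 1
  constructor
  · have e0 : (⨆ t : ℕ, ((!![1, 0, 0, 0; 1/2, 1/2, 0, 0; 0, 1/2, 1/2, 0; 0, 0, 1/2, 1/2] :
        Matrix (Fin 4) (Fin 4) ℝ) ^ t) 3 0)
        = ⨆ t : ℕ, 1 - ((t : ℝ) * ((t : ℝ) - 1) / 2 + t + 1) * (1/2)^t :=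
      iSup_congr fun t => (four_node_row1 t).1
    have e1 : (⨆ t : ℕ, ((!![1, 0, 0, 0; 1/2, 1/2, 0, 0; 0, 1/2, 1/2, 0; 0, 0, 1/2, 1/2] :
        Matrix (Fin 4) (Fin 4) ℝ) ^ t) 3 1)
        = ⨆ t : ℕ, ((t : ℝ) * ((t : ℝ) - 1) / 2) * (1/2)^t :=
      iSup_congr fun t => (four_node_row1 t).2.1
    have e2 : (⨆ t : ℕ, ((!![1, 0, 0, 0; 1/2, 1/2, 0, 0; 0, 1/2, 1/2, 0; 0, 0, 1/2, 1/2] :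
        Matrix (Fin 4) (Fin 4) ℝ) ^ t) 3 2)
        = ⨆ t : ℕ, (t : ℝ) * (1/2)^t :=
      iSup_congr fun t => (four_node_row1 t).2.2.1
    rw [e0, e1, e2, hsupB, min_eq_left hsupC_ge, min_eq_right hsupA_ge]
  · have e0 : (⨆ t : ℕ, ((!![1/2, 1/2, 0, 0; 0, 1, 0, 0; 1/2, 0, 1/2, 0; 0, 0, 1/2, 1/2] :
        Matrix (Fin 4) (Fin 4) ℝ) ^ t) 3 0)
        = ⨆ t : ℕ, ((t : ℝ) * ((t : ℝ) - 1) / 2) * (1/2)^t :=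
      iSup_congr fun t => (four_node_row2 t).1
    have e1 : (⨆ t : ℕ, ((!![1/2, 1/2, 0, 0; 0, 1, 0, 0; 1/2, 0, 1/2, 0; 0, 0, 1/2, 1/2] :
        Matrix (Fin 4) (Fin 4) ℝ) ^ t) 3 1)
        = ⨆ t : ℕ, 1 - ((t : ℝ) * ((t : ℝ) - 1) / 2 + t + 1) * (1/2)^t :=
      iSup_congr fun t => (four_node_row2 t).2.1
    have e2 : (⨆ t : ℕ, ((!![1/2, 1/2, 0, 0; 0, 1, 0, 0; 1/2, 0, 1/2, 0; 0, 0, 1/2, 1/2] :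
        Matrix (Fin 4) (Fin 4) ℝ) ^ t) 3 2)
        = ⨆ t : ℕ, (t : ℝ) * (1/2)^t :=
      iSup_congr fun t => (four_node_row2 t).2.2.1
    rw [e0, e1, e2, hsupB, min_eq_left (le_min hsupA_ge hsupC_ge)]
end

section
/- Let Δ1 and Δ2 be the 4 × 4 real matrices (nodes ordered (u, v, w, τ)) Δ1 = [[1,0,0,0],[1/2,1/2,0,0],[0,1/2,1/2,0],[0,0,1/2,1/2]] and Δ2 = [[1/2,1/2,0,0],[0,1,0,0],[1/2,0,1/2,0],[0,0,1/2,1/2]], and let Δ̄ = (1/2)·Δ1 + (1/2)·Δ2 = [[3/4,1/4,0,0],[1/4,3/4,0,0],[1/4,1/4,1/2,0],[0,0,1/2,1/2]]. Then the multi-head minimax fidelity over the non-sink nodes equals 1/2: min over j ∈ {u, v, w} of sup_{t ∈ ℕ} ((Δ̄)^t)_{τ,j} = 1/2. In particular it strictly exceeds 3/8. -/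
open Filter Topology

private noncomputable def Mbar' : Matrix (Fin 4) (Fin 4) ℝ :=
  !![3/4, 1/4, 0, 0; 1/4, 3/4, 0, 0; 1/4, 1/4, 1/2, 0; 0, 0, 1/2, 1/2]

private lemma Mbar'_pow (t : ℕ) :
    (Mbar' ^ t) 3 0 = (1 - (t+1)/2^t)/2 ∧ (Mbar' ^ t) 3 1 = (1 - (t+1)/2^t)/2 ∧
    (Mbar' ^ t) 3 2 = t/2^t ∧ (Mbar' ^ t) 3 3 = 1/2^t := by
  induction t with
  | zero => simp [Matrix.one_apply]
  | succ t ih =>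
    obtain ⟨h0, h1, h2, h3⟩ := ih
    have hp : (0:ℝ) < 2 ^ t := by positivity
    rw [pow_succ]
    refine ⟨?_, ?_, ?_, ?_⟩ <;>
    · rw [Matrix.mul_apply, Fin.sum_univ_four, h0, h1, h2, h3]
      simp [Mbar', Matrix.cons_val_zero, Matrix.cons_val_one, Matrix.cons_val_two,
        Matrix.cons_val_three, Matrix.head_cons, Matrix.tail_cons, Matrix.head_fin_const,
        Matrix.vecHead, Matrix.vecTail]
      push_cast
      field_simp
      ring_nf <;> tauto

private lemma two_mul_le_two_pow : ∀ t : ℕ, 2 * t ≤ 2 ^ t := by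
  intro t
  induction t with
  | zero => simp
  | succ t ih =>
    rcases Nat.eq_zero_or_pos t with rfl | ht
    · norm_num
    · have h2 : 2 ≤ 2 ^ t := by
        calc 2 = 2 ^ 1 := rfl
        _ ≤ 2 ^ t := Nat.pow_le_pow_right (by norm_num) ht
      calc 2 * (t + 1) = 2 * t + 2 := by ring
        _ ≤ 2 ^ t + 2 ^ t := Nat.add_le_add ih h2
        _ = 2 ^ (t + 1) := by ring

private lemma c_le (t : ℕ) : ((t : ℝ) / 2 ^ t) ≤ 1/2 := by
  rw [div_le_div_iff₀ (by positivity) (by norm_num)]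
  have := two_mul_le_two_pow t
  push_cast [← Nat.cast_le (α := ℝ)] at this ⊢
  linarith

private lemma sup_c : (⨆ t : ℕ, ((t : ℝ) / 2 ^ t)) = 1/2 := by
  refine le_antisymm (ciSup_le c_le) ?_
  have h1 : ((1 : ℕ) : ℝ) / 2 ^ (1:ℕ) = 1/2 := by norm_num
  calc (1/2 : ℝ) = ((1:ℕ) : ℝ) / 2 ^ (1:ℕ) := h1.symm
    _ ≤ ⨆ t : ℕ, ((t : ℝ) / 2 ^ t) :=
        le_ciSup (f := fun t : ℕ => (t:ℝ)/2^t) ⟨1/2, by rintro x ⟨t, rfl⟩; exact c_le t⟩ 1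

private lemma sup_a : (⨆ t : ℕ, ((1 - ((t:ℝ)+1)/2^t)/2)) = 1/2 := by
  have hmono : Monotone (fun t : ℕ => (1 - ((t:ℝ)+1)/2^t)/2) := by
    apply monotone_nat_of_le_succ
    intro t
    have hp : (0:ℝ) < 2 ^ t := by positivity
    have : ((t:ℝ)+1+1)/2^(t+1) ≤ ((t:ℝ)+1)/2^t := by
      rw [div_le_div_iff₀ (by positivity) hp]
      push_cast
      ring_nf
      nlinarith [hp]
    push_cast
    linarith
  have htend : Tendsto (fun t : ℕ => (1 - ((t:ℝ)+1)/2^t)/2) atTop (𝓝 (1/2)) := by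
    have h0 : Tendsto (fun t : ℕ => ((t:ℝ)+1)/2^t) atTop (𝓝 0) := by
      have h1 : Tendsto (fun t : ℕ => (t:ℝ) * (1/2)^t) atTop (𝓝 0) :=
        tendsto_self_mul_const_pow_of_lt_one (by norm_num) (by norm_num)
      have h2 : Tendsto (fun t : ℕ => ((1:ℝ)/2)^t) atTop (𝓝 0) :=
        tendsto_pow_atTop_nhds_zero_of_lt_one (by norm_num) (by norm_num)
      have := h1.add h2
      rw [add_zero] at this
      refine this.congr fun t => ?_
      rw [div_pow, one_pow]
      field_simp
    have := ((tendsto_const_nhds (x := (1:ℝ))).sub h0).div_const 2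
    simpa using this
  exact ((isLUB_of_tendsto_atTop hmono htend).ciSup_eq)

/-- **Multi-head minimax fidelity in the 4-node example.**
Nodes are ordered `(u, v, w, τ) = (0, 1, 2, 3)` with sink `τ = 3`.  The multi-head
diffusion operator `Δ̄ = (1/2)•Δ1 + (1/2)•Δ2` equals the explicit matrix
`[[3/4,1/4,0,0],[1/4,3/4,0,0],[1/4,1/4,1/2,0],[0,0,1/2,1/2]]`, and its minimax fidelity
over the non-sink nodes — the minimum over `j ∈ {u, v, w}` of `sup_t ((Δ̄)^t)_{τ,j}` —
equals `1/2`; in particular it strictly exceeds `3/8`. -/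
theorem four_node_multi_head_minimax_fidelity
    (Δ1 Δ2 : Matrix (Fin 4) (Fin 4) ℝ)
    (hΔ1 : Δ1 = !![1, 0, 0, 0; 1/2, 1/2, 0, 0; 0, 1/2, 1/2, 0; 0, 0, 1/2, 1/2])
    (hΔ2 : Δ2 = !![1/2, 1/2, 0, 0; 0, 1, 0, 0; 1/2, 0, 1/2, 0; 0, 0, 1/2, 1/2]) :
    (1/2 : ℝ) • Δ1 + (1/2 : ℝ) • Δ2 =
      !![3/4, 1/4, 0, 0; 1/4, 3/4, 0, 0; 1/4, 1/4, 1/2, 0; 0, 0, 1/2, 1/2] ∧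
    min (⨆ t : ℕ, (((1/2 : ℝ) • Δ1 + (1/2 : ℝ) • Δ2) ^ t) 3 0)
      (min (⨆ t : ℕ, (((1/2 : ℝ) • Δ1 + (1/2 : ℝ) • Δ2) ^ t) 3 1)
        (⨆ t : ℕ, (((1/2 : ℝ) • Δ1 + (1/2 : ℝ) • Δ2) ^ t) 3 2)) = 1/2 ∧
    (3/8 : ℝ) <
      min (⨆ t : ℕ, (((1/2 : ℝ) • Δ1 + (1/2 : ℝ) • Δ2) ^ t) 3 0)
        (min (⨆ t : ℕ, (((1/2 : ℝ) • Δ1 + (1/2 : ℝ) • Δ2) ^ t) 3 1)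
          (⨆ t : ℕ, (((1/2 : ℝ) • Δ1 + (1/2 : ℝ) • Δ2) ^ t) 3 2)) := by
  have hM : (1/2 : ℝ) • Δ1 + (1/2 : ℝ) • Δ2 = Mbar' := by
    subst hΔ1 hΔ2
    ext i j
    fin_cases i <;> fin_cases j <;>
      simp [Mbar', Matrix.smul_apply, Matrix.add_apply, Matrix.cons_val_zero, Matrix.cons_val_one, Matrix.cons_val_two, Matrix.cons_val_three, Matrix.head_cons, Matrix.tail_cons, Matrix.vecHead, Matrix.vecTail] <;> norm_num
  have h0 : (⨆ t : ℕ, (((1/2 : ℝ) • Δ1 + (1/2 : ℝ) • Δ2) ^ t) 3 0) = 1/2 := by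
    rw [hM]
    rw [show (fun t : ℕ => (Mbar' ^ t) 3 0) = fun t : ℕ => (1 - ((t:ℝ)+1)/2^t)/2 from
      funext fun t => (Mbar'_pow t).1]
    exact sup_a
  have h1 : (⨆ t : ℕ, (((1/2 : ℝ) • Δ1 + (1/2 : ℝ) • Δ2) ^ t) 3 1) = 1/2 := by
    rw [hM]
    rw [show (fun t : ℕ => (Mbar' ^ t) 3 1) = fun t : ℕ => (1 - ((t:ℝ)+1)/2^t)/2 from
      funext fun t => (Mbar'_pow t).2.1]
    exact sup_a
  have h2 : (⨆ t : ℕ, (((1/2 : ℝ) • Δ1 + (1/2 : ℝ) • Δ2) ^ t) 3 2) = 1/2 := by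
    rw [hM]
    rw [show (fun t : ℕ => (Mbar' ^ t) 3 2) = fun t : ℕ => ((t:ℝ))/2^t from
      funext fun t => (Mbar'_pow t).2.2.1]
    exact sup_c
  refine ⟨hM.trans rfl, ?_, ?_⟩ <;> rw [h0, h1, h2] <;> norm_num
end

section
/- There exist n ≥ 2, H = 2 n × n real matrices Δ1, Δ2, each row-stochastic (nonnegative entries, rows summing to 1), lower triangular ((Δh)_{ij} = 0 for i < j), with strictly positive diagonal entries, and convex weights β1, β2 ≥ 0 with β1 + β2 = 1, such that every head individually has strictly positive minimax fidelity, min over j < n of sup_{t ∈ ℕ} ((Δh)^t)_{n,j} > 0 for h = 1, 2, and yet the multi-head minimax fidelity strictly exceeds the best single head's: min over j < n of sup_{t ∈ ℕ} ((β1·Δ1 + β2·Δ2)^t)_{n,j} > max over h ∈ {1,2} of (min over j < n of sup_{t ∈ ℕ} ((Δh)^t)_{n,j}). -/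
noncomputable def fidS (t : ℕ) : ℝ := 2 - 2 * (1/2)^t

lemma fidS_nonneg (t : ℕ) : 0 ≤ fidS t := by
  have h : ((1:ℝ)/2)^t ≤ 1 := pow_le_one₀ (by norm_num) (by norm_num)
  unfold fidS; linarith

lemma fidS_le_two (t : ℕ) : fidS t ≤ 2 := by
  have h : (0:ℝ) ≤ (1/2)^t := by positivity
  unfold fidS; linarith

lemma fidS_two : fidS 2 = 3/2 := by norm_num [fidS]

lemma fidMpow (a b : ℝ) (t : ℕ) :
    (!![1,0,0;0,1,0;a,b,(1/2:ℝ)]) ^ t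
      = !![1,0,0;0,1,0; a * fidS t, b * fidS t, (1/2)^t] := by
  induction t with
  | zero =>
      simp [fidS, Matrix.one_fin_three]
  | succ t ih =>
      rw [pow_succ, ih]
      ext i j
      fin_cases i <;> fin_cases j <;>
        simp [Matrix.mul_apply, Fin.sum_univ_three, fidS, pow_succ] <;> ring

lemma fid_bdd (c : ℝ) (hc : 0 ≤ c) :
    BddAbove (Set.range fun t : ℕ => c * fidS t) := by
  refine ⟨2 * c, ?_⟩
  rintro _ ⟨t, rfl⟩
  show c * fidS t ≤ 2 * c
  nlinarith [fidS_le_two t]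

lemma fid_sup_le (c : ℝ) (hc : 0 ≤ c) : (⨆ t : ℕ, c * fidS t) ≤ 2 * c :=
  ciSup_le fun t => by nlinarith [fidS_le_two t]

lemma fid_le_sup (c : ℝ) (hc : 0 ≤ c) : c * (3/2) ≤ ⨆ t : ℕ, c * fidS t := by
  have := le_ciSup (fid_bdd c hc) 2
  rwa [fidS_two] at this

lemma fid_sup_nonneg (c : ℝ) (hc : 0 ≤ c) : 0 ≤ ⨆ t : ℕ, c * fidS t := by
  have := le_ciSup (fid_bdd c hc) 0
  simpa [fidS] using this

instance fid_nonempty (n : ℕ) : Nonempty {j : Fin (n + 2) // j ≠ Fin.last (n + 1)} :=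
  ⟨⟨⟨0, by omega⟩, by simp [Fin.ext_iff]⟩⟩

/-- **Multi-head minimax fidelity can strictly exceed the best single head's.**
There exist a size `n + 2 ≥ 2`, two row-stochastic lower-triangular diffusion matrices
`Δ1, Δ2` with strictly positive diagonals (sink `Fin.last (n+1)`), and convex weights
`β1, β2`, such that each head alone has strictly positive minimax fidelity
(`min` over non-sink `j` of `sup_t ((Δh)^t)_{τ,j}`), and yet the minimax fidelity of the
multi-head diffusion operator `β1•Δ1 + β2•Δ2` strictly exceeds the maximum of the two
individual minimax fidelities. -/
theorem exists_multi_head_minimax_fidelity_amplification :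
    ∃ (n : ℕ) (Δ1 Δ2 : Matrix (Fin (n + 2)) (Fin (n + 2)) ℝ) (β1 β2 : ℝ),
      (∀ i j, 0 ≤ Δ1 i j) ∧ (∀ i, ∑ j, Δ1 i j = 1) ∧
      (∀ i j : Fin (n + 2), i < j → Δ1 i j = 0) ∧ (∀ i, 0 < Δ1 i i) ∧
      (∀ i j, 0 ≤ Δ2 i j) ∧ (∀ i, ∑ j, Δ2 i j = 1) ∧
      (∀ i j : Fin (n + 2), i < j → Δ2 i j = 0) ∧ (∀ i, 0 < Δ2 i i) ∧
      0 ≤ β1 ∧ 0 ≤ β2 ∧ β1 + β2 = 1 ∧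
      (0 < ⨅ j : {j : Fin (n + 2) // j ≠ Fin.last (n + 1)},
        ⨆ t : ℕ, (Δ1 ^ t) (Fin.last (n + 1)) j) ∧
      (0 < ⨅ j : {j : Fin (n + 2) // j ≠ Fin.last (n + 1)},
        ⨆ t : ℕ, (Δ2 ^ t) (Fin.last (n + 1)) j) ∧
      max
        (⨅ j : {j : Fin (n + 2) // j ≠ Fin.last (n + 1)},
          ⨆ t : ℕ, (Δ1 ^ t) (Fin.last (n + 1)) j)
        (⨅ j : {j : Fin (n + 2) // j ≠ Fin.last (n + 1)},
          ⨆ t : ℕ, (Δ2 ^ t) (Fin.last (n + 1)) j) <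
      ⨅ j : {j : Fin (n + 2) // j ≠ Fin.last (n + 1)},
        ⨆ t : ℕ, ((β1 • Δ1 + β2 • Δ2) ^ t) (Fin.last (n + 1)) j := by
  refine ⟨1, !![1,0,0;0,1,0;2/5,1/10,1/2], !![1,0,0;0,1,0;1/10,2/5,1/2],
    1/2, 1/2, ?_, ?_, ?_, ?_, ?_, ?_, ?_, ?_, by norm_num, by norm_num, by norm_num,
    ?_, ?_, ?_⟩
  · intro i j; fin_cases i <;> fin_cases j <;> norm_num
  · intro i; fin_cases i <;> norm_num [Fin.sum_univ_succ]
  · intro i j h; fin_cases i <;> fin_cases j <;> first | rfl | exact absurd h (by decide)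
  · intro i; fin_cases i <;> norm_num
  · intro i j; fin_cases i <;> fin_cases j <;> norm_num
  · intro i; fin_cases i <;> norm_num [Fin.sum_univ_succ]
  · intro i j h; fin_cases i <;> fin_cases j <;> first | rfl | exact absurd h (by decide)
  · intro i; fin_cases i <;> norm_num
  · -- head 1 has positive minimax fidelity
    refine lt_of_lt_of_le (show (0:ℝ) < 3/20 by norm_num) (le_ciInf ?_)
    rintro ⟨j, hj⟩
    fin_cases j
    · calc (3/20:ℝ) ≤ (2/5) * (3/2) := by norm_num
        _ ≤ ⨆ t : ℕ, (2/5:ℝ) * fidS t := fid_le_sup _ (by norm_num)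
        _ = _ := iSup_congr fun t => by rw [fidMpow]; rfl
    · calc (3/20:ℝ) ≤ (1/10) * (3/2) := by norm_num
        _ ≤ ⨆ t : ℕ, (1/10:ℝ) * fidS t := fid_le_sup _ (by norm_num)
        _ = _ := iSup_congr fun t => by rw [fidMpow]; rfl
    · exact absurd rfl hj
  · -- head 2 has positive minimax fidelity
    refine lt_of_lt_of_le (show (0:ℝ) < 3/20 by norm_num) (le_ciInf ?_)
    rintro ⟨j, hj⟩
    fin_cases j
    · calc (3/20:ℝ) ≤ (1/10) * (3/2) := by norm_num
        _ ≤ ⨆ t : ℕ, (1/10:ℝ) * fidS t := fid_le_sup _ (by norm_num)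
        _ = _ := iSup_congr fun t => by rw [fidMpow]; rfl
    · calc (3/20:ℝ) ≤ (2/5) * (3/2) := by norm_num
        _ ≤ ⨆ t : ℕ, (2/5:ℝ) * fidS t := fid_le_sup _ (by norm_num)
        _ = _ := iSup_congr fun t => by rw [fidMpow]; rfl
    · exact absurd rfl hj
  · -- amplification
    have hM : ((1/2:ℝ) • (!![1,0,0;0,1,0;2/5,1/10,1/2] : Matrix (Fin (1+2)) (Fin (1+2)) ℝ)
        + (1/2:ℝ) • !![1,0,0;0,1,0;1/10,2/5,1/2])
        = (!![1,0,0;0,1,0;1/4,1/4,1/2] : Matrix (Fin (1+2)) (Fin (1+2)) ℝ) := by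
      ext i j
      fin_cases i <;> fin_cases j <;>
        simp [Matrix.add_apply, Matrix.smul_apply] <;> norm_num
    rw [hM]
    have h1 : (⨅ j : {j : Fin (1+2) // j ≠ Fin.last (1+1)},
        ⨆ t : ℕ, ((!![1,0,0;0,1,0;2/5,1/10,1/2] : Matrix (Fin (1+2)) (Fin (1+2)) ℝ) ^ t)
          (Fin.last (1+1)) j) ≤ 1/5 := by
      refine le_trans (ciInf_le ⟨0, ?_⟩ ⟨1, by decide⟩) ?_
      · rintro _ ⟨⟨j, hj⟩, rfl⟩
        fin_cases j
        · calc (0:ℝ) ≤ ⨆ t : ℕ, (2/5:ℝ) * fidS t := fid_sup_nonneg _ (by norm_num)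
            _ = _ := iSup_congr fun t => by rw [fidMpow]; rfl
        · calc (0:ℝ) ≤ ⨆ t : ℕ, (1/10:ℝ) * fidS t := fid_sup_nonneg _ (by norm_num)
            _ = _ := iSup_congr fun t => by rw [fidMpow]; rfl
        · exact absurd rfl hj
      · calc (⨆ t : ℕ, ((!![1,0,0;0,1,0;2/5,1/10,1/2] : Matrix (Fin (1+2)) (Fin (1+2)) ℝ) ^ t)
              (Fin.last (1+1))
              ((⟨1, by decide⟩ : {j : Fin (1+2) // j ≠ Fin.last (1+1)}) : Fin (1+2)))
            = ⨆ t : ℕ, (1/10:ℝ) * fidS t :=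
              iSup_congr fun t => by rw [fidMpow]; rfl
          _ ≤ 2 * (1/10) := fid_sup_le _ (by norm_num)
          _ ≤ 1/5 := by norm_num
    have h2 : (⨅ j : {j : Fin (1+2) // j ≠ Fin.last (1+1)},
        ⨆ t : ℕ, ((!![1,0,0;0,1,0;1/10,2/5,1/2] : Matrix (Fin (1+2)) (Fin (1+2)) ℝ) ^ t)
          (Fin.last (1+1)) j) ≤ 1/5 := by
      refine le_trans (ciInf_le ⟨0, ?_⟩ ⟨0, by decide⟩) ?_
      · rintro _ ⟨⟨j, hj⟩, rfl⟩
        fin_cases j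
        · calc (0:ℝ) ≤ ⨆ t : ℕ, (1/10:ℝ) * fidS t := fid_sup_nonneg _ (by norm_num)
            _ = _ := iSup_congr fun t => by rw [fidMpow]; rfl
        · calc (0:ℝ) ≤ ⨆ t : ℕ, (2/5:ℝ) * fidS t := fid_sup_nonneg _ (by norm_num)
            _ = _ := iSup_congr fun t => by rw [fidMpow]; rfl
        · exact absurd rfl hj
      · calc (⨆ t : ℕ, ((!![1,0,0;0,1,0;1/10,2/5,1/2] : Matrix (Fin (1+2)) (Fin (1+2)) ℝ) ^ t)
              (Fin.last (1+1))
              ((⟨0, by decide⟩ : {j : Fin (1+2) // j ≠ Fin.last (1+1)}) : Fin (1+2)))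
            = ⨆ t : ℕ, (1/10:ℝ) * fidS t :=
              iSup_congr fun t => by rw [fidMpow]; rfl
          _ ≤ 2 * (1/10) := fid_sup_le _ (by norm_num)
          _ ≤ 1/5 := by norm_num
    have h3 : (3/8:ℝ) ≤ ⨅ j : {j : Fin (1+2) // j ≠ Fin.last (1+1)},
        ⨆ t : ℕ, ((!![1,0,0;0,1,0;1/4,1/4,1/2] : Matrix (Fin (1+2)) (Fin (1+2)) ℝ) ^ t)
          (Fin.last (1+1)) j := by
      refine le_ciInf ?_
      rintro ⟨j, hj⟩
      fin_cases j
      · calc (3/8:ℝ) = (1/4) * (3/2) := by norm_num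
          _ ≤ ⨆ t : ℕ, (1/4:ℝ) * fidS t := fid_le_sup _ (by norm_num)
          _ = _ := iSup_congr fun t => by rw [fidMpow]; rfl
      · calc (3/8:ℝ) = (1/4) * (3/2) := by norm_num
          _ ≤ ⨆ t : ℕ, (1/4:ℝ) * fidS t := fid_le_sup _ (by norm_num)
          _ = _ := iSup_congr fun t => by rw [fidMpow]; rfl
      · exact absurd rfl hj
    exact lt_of_le_of_lt (max_le h1 h2)
      (lt_of_lt_of_le (by norm_num : (1/5:ℝ) < 3/8) h3)
end
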